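/- arXiv:2605.04758 — 2 statements merged into one kernel-verified Lean document; each statement's English description precedes it below -/
import Mathlib

section
/- Let n ≥ 1 and w : Fin n → ℝ, let U_w be the 2^n × 2^n diagonal matrix with entries U_w[b,b] = exp(2πi ∑_j w_j b_j), and let ψ₊ : 𝔽₂ⁿ → ℂ be the uniform-superposition unit vector ψ₊(b) = 2^{−n/2}. Then for every x, z ∈ 𝔽₂ⁿ: if the support of z is contained in the support of x, then ⟨U_w ψ₊, P(x,z) (U_w ψ₊)⟩ = ∏_{j : x_j = 1} cos(2π w_j)^{1−z_j} · sin(2π w_j)^{z_j}; otherwise ⟨U_w ψ₊, P(x,z) (U_w ψ₊)⟩ = 0. In particular, |⟨U_w ψ₊, P(x,z) (U_w ψ₊)⟩| = ∏_{j=1}^n |1 + exp(2πi (2 w_j x_j + z_j / 2))| / 2, where x_j, z_j ∈ {0,1} are the representatives. -/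
open scoped BigOperators

/-- The Pauli expectation value `⟨ψ, P(x,z) ψ⟩`. -/
noncomputable def pauliExp (n : ℕ) (x z : Fin n → ZMod 2)
    (ψ : (Fin n → ZMod 2) → ℂ) : ℂ :=
  ∑ b : Fin n → ZMod 2,
    (starRingEnd ℂ) (ψ (b + x)) * Complex.I ^ (∑ j, (x j).val * (z j).val) *
      (-1 : ℂ) ^ (∑ j, (z j).val * (b j).val) * ψ b

/-- The single-qubit `Z`-rotation (SQR) layer `U_w|b⟩ = e^{2πi w·b}|b⟩`. -/
noncomputable def sqrGate (n : ℕ) (w : Fin n → ℝ) :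
    Matrix (Fin n → ZMod 2) (Fin n → ZMod 2) ℂ :=
  Matrix.diagonal fun b =>
    Complex.exp (((2 * Real.pi * ∑ j, w j * ((b j).val : ℝ) : ℝ) : ℂ) * Complex.I)

/-- The uniform-superposition unit vector `ψ₊ = |+⟩^⊗n`, `ψ₊(b) = 2^{−n/2}`. -/
noncomputable def psiPlus (n : ℕ) : (Fin n → ZMod 2) → ℂ :=
  fun _ => (((Real.sqrt (2 ^ n))⁻¹ : ℝ) : ℂ)

/-!
`U_w ψ₊` is the product state `⊗ⱼ (|0⟩ + e^{2πi wⱼ}|1⟩)/√2`, and the phase `i^{x·z}` and the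
sign `(-1)^{z·b}` of `P(x,z)` split over the qubits, so the expectation value is the product of
the one-qubit values `⟨φⱼ, i^{xⱼzⱼ} X^{xⱼ} Z^{zⱼ} φⱼ⟩`. For `(xⱼ, zⱼ) = (0,0), (0,1), (1,0), (1,1)`
these are `1, 0, cos 2πwⱼ, sin 2πwⱼ`, each of modulus `|cos π(2wⱼxⱼ + zⱼ/2)|`, which is half of
`|1 + e^{2πi(2wⱼxⱼ + zⱼ/2)}|`.
-/

open Complex

theorem ZMod.two_eq_zero_or_eq_one (a : ZMod 2) : a = 0 ∨ a = 1 := by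
  revert a; decide

theorem sum_zmod_two {M : Type*} [AddCommMonoid M] (f : ZMod 2 → M) :
    ∑ v : ZMod 2, f v = f 0 + f 1 :=
  Fin.sum_univ_two f

theorem inv_sqrt_two_mul_self : ((Real.sqrt 2)⁻¹ : ℝ) * ((Real.sqrt 2)⁻¹ : ℝ) = (2⁻¹ : ℂ) := by
  rw [← ofReal_mul, ← mul_inv, Real.mul_self_sqrt zero_le_two]
  push_cast; rfl

theorem norm_one_add_exp_two_mul_I (s : ℝ) :
    ‖1 + exp (((2 * s : ℝ) : ℂ) * I)‖ = 2 * |Real.cos s| := by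
  have hfactor : 1 + exp (((2 * s : ℝ) : ℂ) * I) = exp (s * I) * (2 * cos s) := by
    rw [two_cos, mul_add, ← exp_add, ← exp_add]
    push_cast
    ring_nf
    rw [exp_zero, add_comm]
  rw [hfactor, norm_mul, norm_exp_ofReal_mul_I, one_mul, norm_mul, Complex.norm_two,
    ← ofReal_cos, norm_real, Real.norm_eq_abs]

/-- The one-qubit case of `pauliExp`: `⟨φ, i^{ac} X^a Z^c φ⟩`. -/
noncomputable def qubitPauliExp (a c : ZMod 2) (φ : ZMod 2 → ℂ) : ℂ :=
  ∑ v : ZMod 2, starRingEnd ℂ (φ (v + a)) * I ^ (a.val * c.val) *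
    (-1 : ℂ) ^ (c.val * v.val) * φ v

theorem pauliExp_prod_eq_prod_qubitPauliExp {n : ℕ} (x z : Fin n → ZMod 2)
    (φ : Fin n → ZMod 2 → ℂ) :
    pauliExp n x z (fun b => ∏ j, φ j (b j)) = ∏ j, qubitPauliExp (x j) (z j) (φ j) := by
  simp only [qubitPauliExp, Fintype.prod_sum, pauliExp, Pi.add_apply, map_prod,
    Finset.prod_mul_distrib, Finset.prod_pow_eq_pow_sum]

noncomputable def rotatedPlus (θ : ℝ) (v : ZMod 2) : ℂ :=
  ((Real.sqrt 2)⁻¹ : ℝ) * exp (((2 * Real.pi * θ * (v.val : ℝ)) : ℝ) * I)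

theorem sqrGate_mulVec_psiPlus (n : ℕ) (w : Fin n → ℝ) :
    (sqrGate n w).mulVec (psiPlus n) = fun b => ∏ j, rotatedPlus (w j) (b j) := by
  ext b
  have hsqrt : Real.sqrt (2 ^ n) = Real.sqrt 2 ^ n := by
    rw [Real.sqrt_eq_iff_mul_self_eq_of_pos (by positivity), ← mul_pow,
      Real.mul_self_sqrt zero_le_two]
  simp only [sqrGate, psiPlus, Matrix.mulVec_diagonal, rotatedPlus, Finset.prod_mul_distrib,
    Finset.prod_const, Finset.card_univ, Fintype.card_fin, ← exp_sum, hsqrt, Finset.mul_sum]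
  push_cast
  rw [mul_comm, inv_pow, Finset.sum_mul]
  simp only [mul_assoc]

theorem rotatedPlus_zero (θ : ℝ) : rotatedPlus θ 0 = ((Real.sqrt 2)⁻¹ : ℝ) := by
  simp [rotatedPlus]

theorem rotatedPlus_one (θ : ℝ) : rotatedPlus θ 1 =
    ((Real.sqrt 2)⁻¹ : ℝ) * (Real.cos (2 * Real.pi * θ) + Real.sin (2 * Real.pi * θ) * I) := by
  simp only [rotatedPlus, ZMod.val_one, Nat.cast_one, mul_one, exp_mul_I, ofReal_cos, ofReal_sin]

theorem qubitPauliExp_zero_rotatedPlus (θ : ℝ) (c : ZMod 2) :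
    qubitPauliExp 0 c (rotatedPlus θ) = if c = 0 then 1 else 0 := by
  have hs := inv_sqrt_two_mul_self
  have hpyth : (Real.sin (2 * Real.pi * θ) : ℂ) ^ 2 + (Real.cos (2 * Real.pi * θ) : ℂ) ^ 2 = 1 := by
    exact_mod_cast Real.sin_sq_add_cos_sq (2 * Real.pi * θ)
  set s : ℂ := (((Real.sqrt 2)⁻¹ : ℝ) : ℂ)
  set sn : ℂ := (Real.sin (2 * Real.pi * θ) : ℂ)
  rcases c.two_eq_zero_or_eq_one with rfl | rfl <;>
    simp only [qubitPauliExp, sum_zmod_two, rotatedPlus_zero, rotatedPlus_one, ZMod.val_zero,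
      ZMod.val_one, add_zero, map_mul, map_add, conj_ofReal, conj_I, mul_zero, zero_mul,
      pow_zero, pow_one, mul_one, one_mul, if_true, one_ne_zero, if_false]
  · linear_combination 2 * hs + s ^ 2 * (hpyth - sn ^ 2 * I_sq)
  · linear_combination s ^ 2 * (-hpyth + sn ^ 2 * I_sq)

theorem qubitPauliExp_one_rotatedPlus (θ : ℝ) (c : ZMod 2) :
    qubitPauliExp 1 c (rotatedPlus θ) =
      ((Real.cos (2 * Real.pi * θ) ^ (1 - c.val) * Real.sin (2 * Real.pi * θ) ^ c.val : ℝ) : ℂ) := by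
  have hs := inv_sqrt_two_mul_self
  rcases c.two_eq_zero_or_eq_one with rfl | rfl <;>
    simp only [qubitPauliExp, sum_zmod_two, rotatedPlus_zero, rotatedPlus_one, ZMod.val_zero,
      ZMod.val_one, show (1 + 1 : ZMod 2) = 0 from rfl, map_mul, map_add, conj_ofReal, conj_I,
      mul_zero, zero_mul, pow_zero, pow_one, mul_one, one_mul, zero_add, Nat.sub_zero,
      Nat.sub_self]
  · linear_combination 2 * (Real.cos (2 * Real.pi * θ) : ℂ) * hs
  · linear_combination (-2 * (Real.sin (2 * Real.pi * θ) : ℂ) * I ^ 2) * hs -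
      (Real.sin (2 * Real.pi * θ) : ℂ) * I_sq

theorem norm_qubitPauliExp_rotatedPlus (θ : ℝ) (a c : ZMod 2) :
    ‖qubitPauliExp a c (rotatedPlus θ)‖ =
      ‖1 + exp (((2 * Real.pi * (2 * θ * (a.val : ℝ) + (c.val : ℝ) / 2) : ℝ) : ℂ) * I)‖ / 2 := by
  rw [show 2 * Real.pi * (2 * θ * (a.val : ℝ) + (c.val : ℝ) / 2) =
      2 * (2 * Real.pi * θ * a.val + Real.pi / 2 * c.val) by ring,
    norm_one_add_exp_two_mul_I, mul_div_cancel_left₀ _ two_ne_zero]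
  rcases a.two_eq_zero_or_eq_one with rfl | rfl <;>
    rcases c.two_eq_zero_or_eq_one with rfl | rfl <;>
    simp [ZMod.val_one, qubitPauliExp_zero_rotatedPlus, qubitPauliExp_one_rotatedPlus,
      Real.cos_add_pi_div_two, -ofReal_cos, -ofReal_sin, norm_real]

theorem stmt14_general (n : ℕ) (w : Fin n → ℝ) (x z : Fin n → ZMod 2) :
    ((∀ j, x j = 0 → z j = 0) →
      pauliExp n x z ((sqrGate n w).mulVec (psiPlus n)) =
        ((∏ j ∈ Finset.univ.filter (fun j : Fin n => x j = 1),
          Real.cos (2 * Real.pi * w j) ^ (1 - (z j).val) *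
            Real.sin (2 * Real.pi * w j) ^ ((z j).val) : ℝ) : ℂ)) ∧
    ((¬ ∀ j, x j = 0 → z j = 0) →
      pauliExp n x z ((sqrGate n w).mulVec (psiPlus n)) = 0) ∧
    ‖pauliExp n x z ((sqrGate n w).mulVec (psiPlus n))‖ =
      ∏ j : Fin n,
        ‖1 + Complex.exp
          (((2 * Real.pi * (2 * w j * ((x j).val : ℝ) + ((z j).val : ℝ) / 2) : ℝ) : ℂ)
            * Complex.I)‖ / 2 := by
  rw [sqrGate_mulVec_psiPlus, pauliExp_prod_eq_prod_qubitPauliExp]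
  refine ⟨fun hsupp => ?_, fun hsupp => ?_, ?_⟩
  · have hoff : ∏ j ∈ Finset.univ.filter (fun j => ¬ x j = 1),
        qubitPauliExp (x j) (z j) (rotatedPlus (w j)) = 1 := by
      refine Finset.prod_eq_one fun j hj => ?_
      have hx : x j = 0 := ((x j).two_eq_zero_or_eq_one).resolve_right (Finset.mem_filter.1 hj).2
      rw [hx, qubitPauliExp_zero_rotatedPlus, if_pos (hsupp j hx)]
    rw [← Finset.prod_filter_mul_prod_filter_not Finset.univ (fun j => x j = 1), hoff, mul_one,
      ofReal_prod]
    refine Finset.prod_congr rfl fun j hj => ?_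
    rw [(Finset.mem_filter.1 hj).2, qubitPauliExp_one_rotatedPlus]
  · push Not at hsupp
    obtain ⟨j, hx, hz⟩ := hsupp
    exact Finset.prod_eq_zero (Finset.mem_univ j)
      (by rw [hx, qubitPauliExp_zero_rotatedPlus, if_neg hz])
  · rw [norm_prod]
    exact Finset.prod_congr rfl fun j _ => norm_qubitPauliExp_rotatedPlus (w j) (x j) (z j)

/-- Pauli spectrum of an SQR layer acting on `|+⟩^⊗n`: if `supp z ⊆ supp x` the
expectation value is `∏_{j : x_j = 1} cos(2πw_j)^{1−z_j} sin(2πw_j)^{z_j}`, otherwise it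
vanishes; in particular its modulus is `∏_j |1 + e^{2πi(2w_j x_j + z_j/2)}| / 2`. -/
theorem stmt14 (n : ℕ) (hn : 1 ≤ n) (w : Fin n → ℝ) (x z : Fin n → ZMod 2) :
    ((∀ j, x j = 0 → z j = 0) →
      pauliExp n x z ((sqrGate n w).mulVec (psiPlus n)) =
        ((∏ j ∈ Finset.univ.filter (fun j : Fin n => x j = 1),
          Real.cos (2 * Real.pi * w j) ^ (1 - (z j).val) *
            Real.sin (2 * Real.pi * w j) ^ ((z j).val) : ℝ) : ℂ)) ∧
    ((¬ ∀ j, x j = 0 → z j = 0) →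
      pauliExp n x z ((sqrGate n w).mulVec (psiPlus n)) = 0) ∧
    ‖pauliExp n x z ((sqrGate n w).mulVec (psiPlus n))‖ =
      ∏ j : Fin n,
        ‖1 + Complex.exp
          (((2 * Real.pi * (2 * w j * ((x j).val : ℝ) + ((z j).val : ℝ) / 2) : ℝ) : ℂ)
            * Complex.I)‖ / 2 :=
  stmt14_general n w x z
end

section
/- Let n ≥ 1 and w : Fin n → ℝ, let U_w be the 2^n × 2^n diagonal matrix with entries U_w[b,b] = exp(2πi ∑_j w_j b_j), and let ψ₊ : 𝔽₂ⁿ → ℂ be the uniform-superposition unit vector ψ₊(b) = 2^{−n/2}. Then (i) for every choice of w, the Pauli support size satisfies card { (x,z) ∈ 𝔽₂ⁿ × 𝔽₂ⁿ : ⟨U_w ψ₊, P(x,z) (U_w ψ₊)⟩ ≠ 0 } ≤ 3^n; and (ii) for every n ≥ 2, 3^n < 4^n − 2^n. Hence for n ≥ 2 the single-qubit Z-rotation layer cannot populate the full non-identity Pauli sector of size 4^n − 2^n. -/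
open scoped BigOperators

lemma conj_exp_mul (θ θ' c : ℝ) :
    (starRingEnd ℂ) (Complex.exp ((θ' : ℂ) * Complex.I) * (c : ℂ)) *
      (Complex.exp ((θ : ℂ) * Complex.I) * (c : ℂ)) =
    Complex.exp ((((θ - θ' : ℝ)) : ℂ) * Complex.I) * ((c : ℂ) * (c : ℂ)) := by
  simp only [map_mul, ← Complex.exp_conj, Complex.conj_ofReal, Complex.conj_I]
  rw [mul_mul_mul_comm, ← Complex.exp_add]
  congr 1
  push_cast
  ring

lemma key_cancel (n : ℕ) (w : Fin n → ℝ) (x z : Fin n → ZMod 2) (j : Fin n)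
    (hx : x j = 0) (hz : z j = 1) :
    pauliExp n x z ((sqrGate n w).mulVec (psiPlus n)) = 0 := by
  classical
  set ψ := (sqrGate n w).mulVec (psiPlus n) with hψ
  set e : Fin n → ZMod 2 := Pi.single j 1 with he
  set c : ℝ := (Real.sqrt (2 ^ n))⁻¹ with hc
  set θ : (Fin n → ZMod 2) → ℝ := fun a => 2 * Real.pi * ∑ k, w k * ((a k).val : ℝ) with hθ
  have hψval : ∀ b, ψ b = Complex.exp (((θ b : ℝ) : ℂ) * Complex.I) * (c : ℂ) := by
    intro b
    simp [hψ, sqrGate, psiPlus, Matrix.mulVec_diagonal, hθ, hc]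
  set A : ℕ := ∑ k, (x k).val * (z k).val with hA
  set F : (Fin n → ZMod 2) → ℂ := fun b =>
    (starRingEnd ℂ) (ψ (b + x)) * Complex.I ^ A *
      (-1 : ℂ) ^ (∑ k, (z k).val * (b k).val) * ψ b with hF
  have hval2 : ∀ a : ZMod 2, a.val = 0 ∧ (a + 1).val = 1 ∨ a.val = 1 ∧ (a + 1).val = 0 := by
    decide
  have hneg : ∀ b, F (b + e) = -F b := by
    intro b
    -- product part
    have hθeq : θ (b + e) - θ (b + e + x) = θ b - θ (b + x) := by
      simp only [hθ, ← mul_sub, ← Finset.sum_sub_distrib]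
      congr 1
      refine Finset.sum_congr rfl fun k _ => ?_
      by_cases hkj : k = j
      · subst hkj
        simp [he, Pi.add_apply, Pi.single_eq_same, hx]
      · simp [he, Pi.add_apply, Pi.single_eq_of_ne hkj]
    have hprod : (starRingEnd ℂ) (ψ (b + e + x)) * ψ (b + e)
        = (starRingEnd ℂ) (ψ (b + x)) * ψ b := by
      rw [hψval, hψval, hψval, hψval, conj_exp_mul, conj_exp_mul, hθeq]
    -- sign part
    have hS : ∑ k ∈ Finset.univ.erase j, (z k).val * ((b + e) k).val
        = ∑ k ∈ Finset.univ.erase j, (z k).val * (b k).val := by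
      refine Finset.sum_congr rfl fun k hk => ?_
      have hkj : k ≠ j := Finset.ne_of_mem_erase hk
      simp [he, Pi.add_apply, Pi.single_eq_of_ne hkj]
    have hsign : ((-1 : ℂ)) ^ (∑ k, (z k).val * ((b + e) k).val)
        = -(-1 : ℂ) ^ (∑ k, (z k).val * (b k).val) := by
      rw [← Finset.add_sum_erase _ _ (Finset.mem_univ j),
        ← Finset.add_sum_erase _ (fun k => (z k).val * (b k).val) (Finset.mem_univ j),
        hS, pow_add, pow_add]
      have hbe : (b + e) j = b j + 1 := by simp [he, Pi.add_apply, Pi.single_eq_same]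
      rw [hbe, hz]
      rcases hval2 (b j) with ⟨h0, h1⟩ | ⟨h0, h1⟩ <;> rw [h0, h1] <;>
        norm_num [ZMod.val_one]
    show (starRingEnd ℂ) (ψ (b + e + x)) * Complex.I ^ A *
        (-1 : ℂ) ^ (∑ k, (z k).val * ((b + e) k).val) * ψ (b + e) = -F b
    rw [hsign, hF]
    linear_combination (-(Complex.I ^ A * (-1 : ℂ) ^ (∑ k, (z k).val * (b k).val))) * hprod
  have hsum : pauliExp n x z ψ = ∑ b, F b := by
    rw [pauliExp]
  have h1 : ∑ b : Fin n → ZMod 2, F (b + e) = ∑ b : Fin n → ZMod 2, F b :=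
    Fintype.sum_equiv (Equiv.addRight e) _ _ (fun b => rfl)
  have h2 : ∑ b : Fin n → ZMod 2, F b = -∑ b : Fin n → ZMod 2, F b :=
    calc ∑ b : Fin n → ZMod 2, F b = ∑ b : Fin n → ZMod 2, F (b + e) := h1.symm
      _ = ∑ b : Fin n → ZMod 2, -F b := by simp only [hneg]
      _ = -∑ b : Fin n → ZMod 2, F b := by rw [Finset.sum_neg_distrib]
  rw [hsum]
  linear_combination (1 / 2 : ℂ) * h2

lemma arith_aux (n : ℕ) (h : 2 ≤ n) : 3 ^ n + 2 ^ n < 4 ^ n := by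
  induction n, h using Nat.le_induction with
  | base => norm_num
  | succ n hn ih =>
    rw [pow_succ, pow_succ, pow_succ]
    generalize 3 ^ n = a at ih ⊢
    generalize 2 ^ n = b at ih ⊢
    generalize 4 ^ n = c at ih ⊢
    omega

/-- The SQR support bottleneck: (i) the Pauli support size of `U_w|+⟩^⊗n` is at most
`3ⁿ` for every choice of rotation angles `w`, and (ii) `3ⁿ < 4ⁿ − 2ⁿ` for `n ≥ 2`, so
SQR layers cannot populate the full non-identity Pauli sector. -/
theorem stmt16 (n : ℕ) (hn : 1 ≤ n) (w : Fin n → ℝ) :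
    (Set.ncard { p : (Fin n → ZMod 2) × (Fin n → ZMod 2) |
        pauliExp n p.1 p.2 ((sqrGate n w).mulVec (psiPlus n)) ≠ 0 } ≤ 3 ^ n) ∧
    (2 ≤ n → 3 ^ n < 4 ^ n - 2 ^ n) := by
  classical
  constructor
  · have hsub : { p : (Fin n → ZMod 2) × (Fin n → ZMod 2) |
        pauliExp n p.1 p.2 ((sqrGate n w).mulVec (psiPlus n)) ≠ 0 } ⊆
        { p : (Fin n → ZMod 2) × (Fin n → ZMod 2) |
          ∀ j, (p.1 j, p.2 j) ≠ ((0 : ZMod 2), (1 : ZMod 2)) } := by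
      intro p hp j hj
      rw [Prod.ext_iff] at hj
      exact hp (key_cancel n w p.1 p.2 j hj.1 hj.2)
    have hT : { p : (Fin n → ZMod 2) × (Fin n → ZMod 2) |
          ∀ j, (p.1 j, p.2 j) ≠ ((0 : ZMod 2), (1 : ZMod 2)) }.ncard = 3 ^ n := by
      have e : ↥{ p : (Fin n → ZMod 2) × (Fin n → ZMod 2) |
            ∀ j, (p.1 j, p.2 j) ≠ ((0 : ZMod 2), (1 : ZMod 2)) } ≃
          (Fin n → {q : ZMod 2 × ZMod 2 // q ≠ (0, 1)}) :=
        { toFun := fun p j => ⟨(p.1.1 j, p.1.2 j), p.2 j⟩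
          invFun := fun f => ⟨(fun j => (f j).1.1, fun j => (f j).1.2),
            fun j => (f j).2⟩
          left_inv := fun p => rfl
          right_inv := fun f => rfl }
      rw [← Nat.card_coe_set_eq, Nat.card_congr e, Nat.card_pi]
      have h3 : Nat.card {q : ZMod 2 × ZMod 2 // q ≠ (0, 1)} = 3 := by
        rw [Nat.card_eq_fintype_card]; decide
      simp [h3]
    calc _ ≤ _ := Set.ncard_le_ncard hsub (Set.toFinite _)
      _ = 3 ^ n := hT
  · intro h2n
    have h1 := arith_aux n h2n
    have h2 : 2 ^ n ≤ 4 ^ n := Nat.pow_le_pow_left (by norm_num) n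
    omega
end
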